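/- Let S = (P, L) be a generalized quadrangle of order (2,4), let (R, ψ) be a faithful representation of S, and let Q be a (2,2)-subGQ of S. Then the subgroup of R generated by {r_x : x ∈ Q} has order 2^5. -/

import Mathlib

open scoped Classical

/-- A slim partial linear space: a nonempty point set, a nonempty collection of
lines each of which is a 3-element set of points, such that any two distinct
points lie in at most one common line. -/
structure SlimPLS (P : Type*) where
  lines : Set (Finset P)
  nonempty_pts : Nonempty P
  nonempty_lines : lines.Nonempty
  three_points : ∀ l ∈ lines, l.card = 3
  unique_line : ∀ l₁ ∈ lines, ∀ l₂ ∈ lines, ∀ x y : P,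
    x ≠ y → x ∈ l₁ → y ∈ l₁ → x ∈ l₂ → y ∈ l₂ → l₁ = l₂

namespace SlimPLS

variable {P : Type*}

/-- Two points are collinear if they are distinct and lie on a common line. -/
def Collinear (S : SlimPLS P) (x y : P) : Prop :=
  x ≠ y ∧ ∃ l ∈ S.lines, x ∈ l ∧ y ∈ l

/-- The collinearity graph of a slim partial linear space. -/
def graph (S : SlimPLS P) : SimpleGraph P where
  Adj x y := S.Collinear x y
  symm := ⟨fun x y h => ⟨Ne.symm h.1, h.2.elim fun l hl => ⟨l, hl.1, hl.2.2, hl.2.1⟩⟩⟩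
  loopless := ⟨fun x h => h.1 rfl⟩

/-- `S` is a generalized quadrangle of order `(2, t)`: it is connected, no point
is collinear with all other points, every point is on exactly `t+1` lines, and
for every point `x` and line `l` with `x ∉ l` there is exactly one point of `l`
collinear with `x`. -/
def IsGQ (S : SlimPLS P) (t : ℕ) : Prop :=
  S.graph.Connected ∧
  (∀ x : P, ∃ y : P, y ≠ x ∧ ¬ S.Collinear x y) ∧
  (∀ x : P, {l | l ∈ S.lines ∧ x ∈ l}.ncard = t + 1) ∧
  (∀ x : P, ∀ l ∈ S.lines, x ∉ l → ∃! y : P, y ∈ l ∧ S.Collinear x y)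

/-- A set of points is an arc if its points are pairwise non-collinear. -/
def IsArc (S : SlimPLS P) (T : Set P) : Prop :=
  ∀ x ∈ T, ∀ y ∈ T, x ≠ y → ¬ S.Collinear x y

/-- `{a,b,c}` is a complete 3-arc: three pairwise distinct, pairwise
non-collinear points not contained in a 4-arc. -/
def Complete3Arc (S : SlimPLS P) (a b c : P) : Prop :=
  a ≠ b ∧ a ≠ c ∧ b ≠ c ∧ S.IsArc {a, b, c} ∧
  ∀ d : P, d ∉ ({a, b, c} : Set P) → ¬ S.IsArc (insert d {a, b, c})

/-- `{a,b,c}` is a complete 3-arc of the subset `Q`: three pairwise distinct,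
pairwise non-collinear points of `Q` not contained in a 4-arc inside `Q`. -/
def Complete3ArcIn (S : SlimPLS P) (Q : Set P) (a b c : P) : Prop :=
  a ∈ Q ∧ b ∈ Q ∧ c ∈ Q ∧ a ≠ b ∧ a ≠ c ∧ b ≠ c ∧ S.IsArc {a, b, c} ∧
  ∀ d ∈ Q, d ∉ ({a, b, c} : Set P) → ¬ S.IsArc (insert d {a, b, c})

/-- `Q` is a sub-generalized-quadrangle of order `(2,t)` of `S`: together with
the lines of `S` contained in it, `Q` is a `(2,t)`-GQ; in particular any line
meeting `Q` in at least two points is contained in `Q`. -/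
def IsSubGQ (S : SlimPLS P) (Q : Set P) (t : ℕ) : Prop :=
  Q.Nonempty ∧
  (∃ l ∈ S.lines, (l : Set P) ⊆ Q) ∧
  (∀ l ∈ S.lines, ∀ x ∈ l, ∀ y ∈ l, x ≠ y → x ∈ Q → y ∈ Q → (l : Set P) ⊆ Q) ∧
  (SimpleGraph.induce Q S.graph).Connected ∧
  (∀ x ∈ Q, ∃ y ∈ Q, y ≠ x ∧ ¬ S.Collinear x y) ∧
  (∀ x ∈ Q, {l | l ∈ S.lines ∧ x ∈ l ∧ (l : Set P) ⊆ Q}.ncard = t + 1) ∧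
  (∀ x ∈ Q, ∀ l ∈ S.lines, (l : Set P) ⊆ Q → x ∉ l → ∃! y : P, y ∈ l ∧ S.Collinear x y)

/-- `S` is a near hexagon: connected of diameter 3, no point collinear with all
other points, and for every point `x` and line `l` there is a unique point of
`l` nearest to `x`. -/
def IsNearHexagon (S : SlimPLS P) : Prop :=
  S.graph.Connected ∧
  (∀ x y : P, S.graph.dist x y ≤ 3) ∧
  (∃ x y : P, S.graph.dist x y = 3) ∧
  (∀ x : P, ∃ y : P, y ≠ x ∧ ¬ S.Collinear x y) ∧
  (∀ x : P, ∀ l ∈ S.lines, ∃! y : P, y ∈ l ∧ ∀ z ∈ l, S.graph.dist x y ≤ S.graph.dist x z)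

/-- `S` is dense: any two points at distance 2 have at least two common
neighbours. -/
def IsDense (S : SlimPLS P) : Prop :=
  ∀ x y : P, S.graph.dist x y = 2 →
    ∃ u v : P, u ≠ v ∧ S.Collinear x u ∧ S.Collinear u y ∧ S.Collinear x v ∧ S.Collinear v y

/-- `Q` is a quad: a convex subset of diameter 2 in which no point is collinear
with all other points of `Q`. -/
def IsQuad (S : SlimPLS P) (Q : Set P) : Prop :=
  (∀ u ∈ Q, ∀ v ∈ Q, ∀ w : P,
      S.graph.dist u w + S.graph.dist w v = S.graph.dist u v → w ∈ Q) ∧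
  (∀ u ∈ Q, ∀ v ∈ Q, S.graph.dist u v ≤ 2) ∧
  (∃ u ∈ Q, ∃ v ∈ Q, S.graph.dist u v = 2) ∧
  (∀ u ∈ Q, ∃ v ∈ Q, v ≠ u ∧ ¬ S.Collinear u v)

/-- A quad `Q` is of type `(2, t₂)` if every point of `Q` lies on exactly
`t₂ + 1` lines contained in `Q`. -/
def QuadType (S : SlimPLS P) (Q : Set P) (t₂ : ℕ) : Prop :=
  ∀ x ∈ Q, {l | l ∈ S.lines ∧ x ∈ l ∧ (l : Set P) ⊆ Q}.ncard = t₂ + 1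

/-- The point-quad pair `(x, Q)` is classical: there is a unique point `y ∈ Q`
nearest to `x`, with `d(x,z) = d(x,y) + d(y,z)` for all `z ∈ Q`. -/
def IsClassicalPair (S : SlimPLS P) (x : P) (Q : Set P) : Prop :=
  ∃! y : P, y ∈ Q ∧ ∀ z ∈ Q, S.graph.dist x z = S.graph.dist x y + S.graph.dist y z

/-- A quad is classical (big) if every point-quad pair with it is classical. -/
def IsClassicalQuad (S : SlimPLS P) (Q : Set P) : Prop :=
  ∀ x : P, S.IsClassicalPair x Q

/-- A subspace: any line containing two of its points is contained in it. -/
def IsSubspace (S : SlimPLS P) (X : Set P) : Prop :=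
  ∀ l ∈ S.lines, ∀ x ∈ l, ∀ y ∈ l, x ≠ y → x ∈ X → y ∈ X → (l : Set P) ⊆ X

/-- The subspace generated by a set of points. -/
def subspaceGen (S : SlimPLS P) (A : Set P) : Set P :=
  ⋂₀ {X | S.IsSubspace X ∧ A ⊆ X}

/-- `NPdim S` is the rank over `F₂` of the distance-3 adjacency matrix. -/
noncomputable def NPdim [Fintype P] (S : SlimPLS P) : ℕ :=
  Matrix.rank (Matrix.of fun x y : P => if S.graph.dist x y = 3 then (1 : ZMod 2) else 0)

/-- `dimV S` is the dimension of the universal representation module of `S`: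
the free `F₂`-vector space on the points modulo the span of the elements
`v_x + v_y + v_z` for the lines `{x,y,z}`. -/
noncomputable def dimV (S : SlimPLS P) : ℕ :=
  Module.finrank (ZMod 2)
    ((P →₀ ZMod 2) ⧸ Submodule.span (ZMod 2)
      {f : P →₀ ZMod 2 | ∃ l ∈ S.lines, f = ∑ x ∈ l, Finsupp.single x 1})

end SlimPLS

/-- A representation of a slim partial linear space `S`: an assignment of an
order-2 element `r x` of `R` to each point `x`, such that the images generate
`R` and for every line `{x,y,z}` the set `{1, r x, r y, r z}` is a Klein four
subgroup (`r x * r y = r z` for the three pairwise distinct points of a line). -/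
structure SlimPLS.Rep {P : Type*} (S : SlimPLS P) (R : Type*) [Group R] where
  r : P → R
  order_two : ∀ x : P, orderOf (r x) = 2
  gen : Subgroup.closure (Set.range r) = ⊤
  line_rel : ∀ l ∈ S.lines, ∀ x ∈ l, ∀ y ∈ l, ∀ z ∈ l,
    x ≠ y → x ≠ z → y ≠ z → r x * r y = r z

/-- A finite 2-group is extraspecial if its Frattini subgroup, commutator
subgroup and center coincide and have order 2. -/
def IsExtraspecial (G : Type*) [Group G] : Prop :=
  Finite G ∧ IsPGroup 2 G ∧ frattini G = commutator G ∧
    commutator G = Subgroup.center G ∧ Nat.card (Subgroup.center G) = 2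


/-!
Two opposite points `z₁, z₂` with two opposite common neighbours `x, y` span a `3 × 3` grid, and
reaching its ninth point in two ways shows that `r z₁` and `r z₂` commute; so `R` is an
elementary abelian `2`-group. Two opposite points `x, y` of `Q` and their three common neighbours
`zᵢ` in `Q` generate `Q` as a subspace, so `r x, r y, r zᵢ` generate the subgroup, and it remains
to see that these five involutions are independent. By faithfulness every nontrivial relation
among them reduces to `r p * r q = r u` for pairwise opposite `p, q, u ∈ Q`, which the
`(2,4)`-GQ forbids: shifting it along a line through `p` that leaves `Q` produces a point outside
`Q` collinear with six points of `Q`, but every point is on only five lines.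
-/

theorem Subgroup.card_closure_range_eq_two_pow {G ι : Type*} [CommGroup G] [Fintype ι]
    (v : ι → G) (hv : ∀ i, v i * v i = 1) (hind : ∀ s : Finset ι, ∏ i ∈ s, v i = 1 → s = ∅) :
    Nat.card (closure (Set.range v)) = 2 ^ Fintype.card ι := by
  have hsq : ∀ s : Finset ι, (∏ i ∈ s, v i) * ∏ i ∈ s, v i = 1 := fun s => by
    simp only [← Finset.prod_mul_distrib, hv, Finset.prod_const_one]
  have hmul : ∀ s t : Finset ι,
      (∏ i ∈ s, v i) * ∏ i ∈ t, v i = ∏ i ∈ symmDiff s t, v i := fun s t => by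
    have hunion : symmDiff s t ∪ s ∩ t = s ∪ t := symmDiff_sup_inf s t
    have hdisj : Disjoint (symmDiff s t) (s ∩ t) := disjoint_symmDiff_inf s t
    rw [← Finset.prod_union_inter, ← hunion, Finset.prod_union hdisj,
      mul_assoc, hsq, mul_one]
  have hinj : Function.Injective fun s : Finset ι => ∏ i ∈ s, v i :=
    fun s t (hst : ∏ i ∈ s, v i = ∏ i ∈ t, v i) =>
      symmDiff_eq_bot.mp (hind _ (by rw [← hmul, hst, hsq]))
  have hrange : (closure (Set.range v) : Set G) = Set.range fun s : Finset ι => ∏ i ∈ s, v i := by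
    refine subset_antisymm (fun g hg => ?_) ?_
    · induction hg using closure_induction with
      | mem _ hg =>
        obtain ⟨i, rfl⟩ := hg
        exact ⟨{i}, Finset.prod_singleton v i⟩
      | one => exact ⟨∅, Finset.prod_empty⟩
      | mul _ _ _ _ hg hh =>
        obtain ⟨s, rfl⟩ := hg
        obtain ⟨t, rfl⟩ := hh
        exact ⟨symmDiff s t, (hmul s t).symm⟩
      | inv _ _ hg =>
        obtain ⟨s, rfl⟩ := hg
        exact ⟨s, (inv_eq_of_mul_eq_one_right (hsq s)).symm⟩
    · rintro _ ⟨s, rfl⟩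
      exact prod_mem fun i _ => subset_closure ⟨i, rfl⟩
  rw [← SetLike.coe_sort_coe, hrange, Nat.card_range_of_injective hinj, Nat.card_eq_fintype_card,
    Fintype.card_finset]

namespace SlimPLS

variable {P : Type*} {S : SlimPLS P} {t : ℕ} {Q : Set P}

section

variable {a b p q v w x y z z₁ z₂ : P}

theorem Collinear.ne (h : S.Collinear x y) : x ≠ y := h.1

theorem Collinear.symm (h : S.Collinear x y) : S.Collinear y x :=
  ⟨h.1.symm, h.2.elim fun l hl => ⟨l, hl.1, hl.2.2, hl.2.1⟩⟩

theorem collinear_of_mem {l : Finset P} (hl : l ∈ S.lines) (hx : x ∈ l) (hy : y ∈ l)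
    (hxy : x ≠ y) : S.Collinear x y :=
  ⟨hxy, l, hl, hx, hy⟩

def Opposite (S : SlimPLS P) (x y : P) : Prop :=
  x ≠ y ∧ ¬ S.Collinear x y

theorem Opposite.symm (h : S.Opposite x y) : S.Opposite y x :=
  ⟨h.1.symm, fun h' => h.2 h'.symm⟩

theorem Opposite.ne_of_collinear (h : S.Opposite x y) (hxz : S.Collinear x z) : z ≠ y := by
  rintro rfl
  exact h.2 hxz

noncomputable def lineOf (S : SlimPLS P) (x y : P) : Finset P :=
  if h : S.Collinear x y then h.2.choose else ∅

theorem lineOf_mem_lines (h : S.Collinear x y) : S.lineOf x y ∈ S.lines := by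
  rw [lineOf, dif_pos h]
  exact h.2.choose_spec.1

theorem left_mem_lineOf (h : S.Collinear x y) : x ∈ S.lineOf x y := by
  rw [lineOf, dif_pos h]
  exact h.2.choose_spec.2.1

theorem right_mem_lineOf (h : S.Collinear x y) : y ∈ S.lineOf x y := by
  rw [lineOf, dif_pos h]
  exact h.2.choose_spec.2.2

theorem eq_lineOf_of_mem (h : S.Collinear x y) {l : Finset P} (hl : l ∈ S.lines) (hx : x ∈ l)
    (hy : y ∈ l) : l = S.lineOf x y :=
  S.unique_line l hl _ (lineOf_mem_lines h) x y h.ne hx hy (left_mem_lineOf h) (right_mem_lineOf h)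

theorem lineOf_comm (h : S.Collinear x y) : S.lineOf y x = S.lineOf x y :=
  eq_lineOf_of_mem h (lineOf_mem_lines h.symm) (right_mem_lineOf h.symm) (left_mem_lineOf h.symm)

/-- The point `x * y` of the paper: the third point on the line through `x` and `y`. -/
noncomputable def third (S : SlimPLS P) (x y : P) : P :=
  if h : (((S.lineOf x y).erase x).erase y).Nonempty then h.choose else x

theorem third_spec (h : S.Collinear x y) :
    S.third x y ∈ S.lineOf x y ∧ S.third x y ≠ x ∧ S.third x y ≠ y := by
  have hne : (((S.lineOf x y).erase x).erase y).Nonempty := by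
    rw [← Finset.card_pos, Finset.card_erase_of_mem (Finset.mem_erase.mpr
        ⟨h.ne.symm, right_mem_lineOf h⟩), Finset.card_erase_of_mem (left_mem_lineOf h),
      S.three_points _ (lineOf_mem_lines h)]
    norm_num
  rw [third, dif_pos hne]
  obtain ⟨hy, hx, hl⟩ := Finset.mem_erase.mp hne.choose_spec |>.imp_right Finset.mem_erase.mp
  exact ⟨hl, hx, hy⟩

theorem third_mem_lineOf (h : S.Collinear x y) : S.third x y ∈ S.lineOf x y := (third_spec h).1

theorem third_ne_left (h : S.Collinear x y) : S.third x y ≠ x := (third_spec h).2.1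

theorem third_ne_right (h : S.Collinear x y) : S.third x y ≠ y := (third_spec h).2.2

theorem lineOf_eq_insert (h : S.Collinear x y) : S.lineOf x y = {x, y, S.third x y} := by
  refine (Finset.eq_of_subset_of_card_le ?_ ?_).symm
  · simp only [Finset.insert_subset_iff, Finset.singleton_subset_iff]
    exact ⟨left_mem_lineOf h, right_mem_lineOf h, third_mem_lineOf h⟩
  · rw [S.three_points _ (lineOf_mem_lines h), Finset.card_insert_of_notMem,
      Finset.card_pair (third_ne_right h).symm]
    simp only [Finset.mem_insert, Finset.mem_singleton, not_or]
    exact ⟨h.ne, (third_ne_left h).symm⟩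

theorem mem_lineOf_iff (h : S.Collinear x y) :
    p ∈ S.lineOf x y ↔ p = x ∨ p = y ∨ p = S.third x y := by
  simp [lineOf_eq_insert h]

theorem collinear_third_left (h : S.Collinear x y) : S.Collinear x (S.third x y) :=
  collinear_of_mem (lineOf_mem_lines h) (left_mem_lineOf h) (third_mem_lineOf h)
    (third_ne_left h).symm

theorem collinear_third_right (h : S.Collinear x y) : S.Collinear y (S.third x y) :=
  collinear_of_mem (lineOf_mem_lines h) (right_mem_lineOf h) (third_mem_lineOf h)
    (third_ne_right h).symm

theorem third_comm (h : S.Collinear x y) : S.third y x = S.third x y := by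
  have hmem := third_mem_lineOf h.symm
  rw [lineOf_comm h, mem_lineOf_iff h] at hmem
  exact hmem.resolve_left (third_ne_right h.symm) |>.resolve_left (third_ne_left h.symm)

theorem third_third (h : S.Collinear x y) : S.third x (S.third x y) = y := by
  have h' := collinear_third_left h
  have hmem := third_mem_lineOf h'
  rw [← eq_lineOf_of_mem h' (lineOf_mem_lines h) (left_mem_lineOf h) (third_mem_lineOf h),
    mem_lineOf_iff h] at hmem
  exact hmem.resolve_left (third_ne_left h') |>.resolve_right (third_ne_right h')

theorem lineOf_ne_lineOf (h₁ : S.Collinear x y) (h₂ : S.Collinear x z) (hyz : S.Opposite y z) :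
    S.lineOf x y ≠ S.lineOf x z := fun h =>
  hyz.2 (collinear_of_mem (lineOf_mem_lines h₁) (right_mem_lineOf h₁) (h ▸ right_mem_lineOf h₂)
    hyz.1)

theorem IsSubspace.lineOf_subset {X : Set P} (hX : S.IsSubspace X) (h : S.Collinear x y)
    (hx : x ∈ X) (hy : y ∈ X) : (S.lineOf x y : Set P) ⊆ X :=
  hX _ (lineOf_mem_lines h) x (left_mem_lineOf h) y (right_mem_lineOf h) h.ne hx hy

theorem IsSubspace.third_mem {X : Set P} (hX : S.IsSubspace X) (h : S.Collinear x y)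
    (hx : x ∈ X) (hy : y ∈ X) : S.third x y ∈ X :=
  hX.lineOf_subset h hx hy (third_mem_lineOf h)

namespace IsGQ

theorem exists_collinear_of_notMem (hGQ : S.IsGQ t) {l : Finset P} (hl : l ∈ S.lines)
    (hx : x ∉ l) : ∃ y ∈ l, S.Collinear x y :=
  (hGQ.2.2.2 x l hl hx).exists

theorem mem_lineOf_of_collinear (hGQ : S.IsGQ t) (hab : S.Collinear a b)
    (hpa : S.Collinear p a) (hpb : S.Collinear p b) : p ∈ S.lineOf a b := by
  by_contra hp
  obtain ⟨c, -, hc⟩ := hGQ.2.2.2 p _ (lineOf_mem_lines hab) hp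
  exact hab.ne ((hc a ⟨left_mem_lineOf hab, hpa⟩).trans (hc b ⟨right_mem_lineOf hab, hpb⟩).symm)

theorem eq_third_of_collinear (hGQ : S.IsGQ t) (hab : S.Collinear a b)
    (hpa : S.Collinear p a) (hpb : S.Collinear p b) : p = S.third a b :=
  ((mem_lineOf_iff hab).mp (hGQ.mem_lineOf_of_collinear hab hpa hpb)).resolve_left hpa.ne
    |>.resolve_left hpb.ne

theorem collinear_third_of_opposite (hGQ : S.IsGQ t) (hab : S.Collinear a b)
    (hpa : S.Opposite p a) (hpb : S.Opposite p b) : S.Collinear p (S.third a b) := by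
  have hp : p ∉ S.lineOf a b := by
    rw [mem_lineOf_iff hab]
    rintro (rfl | rfl | rfl)
    exacts [hpa.1 rfl, hpb.1 rfl, hpa.2 (collinear_third_left hab).symm]
  obtain ⟨c, hc, hpc⟩ := hGQ.exists_collinear_of_notMem (lineOf_mem_lines hab) hp
  rcases (mem_lineOf_iff hab).mp hc with rfl | rfl | rfl
  exacts [absurd hpc hpa.2, absurd hpc hpb.2, hpc]

theorem opposite_of_collinear (hGQ : S.IsGQ t) (hab : S.Collinear a b) (hpa : S.Collinear p a)
    (hpb : p ≠ b) (hpc : p ≠ S.third a b) : S.Opposite p b :=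
  ⟨hpb, fun h => hpc (hGQ.eq_third_of_collinear hab hpa h)⟩

theorem opposite_third_of_collinear_left (hGQ : S.IsGQ t) (hab : S.Collinear a b)
    (hpa : S.Collinear p a) (hpb : S.Opposite p b) : S.Opposite p (S.third a b) := by
  refine ⟨fun h => hpb.2 (h ▸ (collinear_third_right hab).symm), fun h => hpb.1 ?_⟩
  rw [← third_third hab]
  exact hGQ.eq_third_of_collinear (collinear_third_left hab) hpa h

theorem opposite_third_of_collinear_right (hGQ : S.IsGQ t) (hab : S.Collinear a b)
    (hpb : S.Collinear p b) (hpa : S.Opposite p a) : S.Opposite p (S.third a b) :=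
  third_comm hab ▸ hGQ.opposite_third_of_collinear_left hab.symm hpb hpa

theorem opposite_of_mem_of_mem (hGQ : S.IsGQ t) {l₁ l₂ : Finset P} (hl₁ : l₁ ∈ S.lines)
    (hl₂ : l₂ ∈ S.lines) (hne : l₁ ≠ l₂) (hx₁ : x ∈ l₁) (hx₂ : x ∈ l₂) (hp : p ∈ l₁)
    (hq : q ∈ l₂) (hpx : p ≠ x) (hqx : q ≠ x) : S.Opposite p q := by
  have hxp : S.Collinear x p := collinear_of_mem hl₁ hx₁ hp hpx.symm
  have hxq : S.Collinear x q := collinear_of_mem hl₂ hx₂ hq hqx.symm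
  have hq₁ : q ∉ l₁ := fun hq₁ => hne (S.unique_line l₁ hl₁ l₂ hl₂ x q hqx.symm hx₁ hq₁ hx₂ hq)
  refine ⟨fun h => hq₁ (h ▸ hp), fun h => hq₁ ?_⟩
  rw [eq_lineOf_of_mem hxp hl₁ hx₁ hp]
  exact hGQ.mem_lineOf_of_collinear hxp hxq.symm h.symm

theorem exists_two_lines (hGQ : S.IsGQ t) (ht : 1 ≤ t) (x : P) :
    ∃ l₁ ∈ S.lines, ∃ l₂ ∈ S.lines, l₁ ≠ l₂ ∧ x ∈ l₁ ∧ x ∈ l₂ := by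
  have hcard : 1 < {l | l ∈ S.lines ∧ x ∈ l}.ncard := by rw [hGQ.2.2.1 x]; omega
  obtain ⟨l₁, h₁, l₂, h₂, hne⟩ := (Set.one_lt_ncard (Set.finite_of_ncard_pos (by omega))).mp hcard
  exact ⟨l₁, h₁.1, l₂, h₂.1, hne, h₁.2, h₂.2⟩

theorem exists_collinear_mem_of_opposite (hGQ : S.IsGQ t) (hxw : S.Opposite x w)
    {l : Finset P} (hl : l ∈ S.lines) (hx : x ∈ l) :
    ∃ p ∈ l, S.Collinear x p ∧ S.Collinear w p := by
  obtain ⟨p, hp, hwp⟩ :=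
    hGQ.exists_collinear_of_notMem hl fun hw => hxw.2 (collinear_of_mem hl hx hw hxw.1)
  exact ⟨p, hp, collinear_of_mem hl hx hp (hxw.symm.ne_of_collinear hwp).symm, hwp⟩

theorem opposite_third_third (hGQ : S.IsGQ t) (h₁ : S.Collinear v z₁) (h₂ : S.Collinear v z₂)
    (hz : S.Opposite z₁ z₂) : S.Opposite (S.third v z₁) (S.third v z₂) :=
  (hGQ.opposite_third_of_collinear_left h₁ (collinear_third_left h₂).symm
    (hGQ.opposite_third_of_collinear_left h₂ h₁.symm hz).symm).symm

theorem opposite_third_of_collinear_of_collinear (hGQ : S.IsGQ t) (hxy : S.Opposite x y)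
    (hxz : S.Collinear x z) (hyz : S.Collinear y z) : S.Opposite (S.third x z) (S.third y z) :=
  (hGQ.opposite_third_of_collinear_right hxz (collinear_third_right hyz).symm
    (hGQ.opposite_third_of_collinear_right hyz hxz hxy).symm).symm

theorem collinear_third_third (hGQ : S.IsGQ t) (hxy : S.Opposite x y) (hz : S.Opposite z₁ z₂)
    (hx₁ : S.Collinear x z₁) (hx₂ : S.Collinear x z₂) (hy₁ : S.Collinear y z₁)
    (hy₂ : S.Collinear y z₂) : S.Collinear (S.third x z₁) (S.third y z₂) :=
  (hGQ.collinear_third_of_opposite hx₁ (hGQ.opposite_third_of_collinear_right hy₂ hx₂ hxy).symm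
    (hGQ.opposite_third_of_collinear_left hy₂ hy₁.symm hz).symm).symm

theorem collinear_third_third_third (hGQ : S.IsGQ t) (hxy : S.Opposite x y)
    (hz : S.Opposite z₁ z₂) (hx₁ : S.Collinear x z₁) (hx₂ : S.Collinear x z₂)
    (hy₁ : S.Collinear y z₁) (hy₂ : S.Collinear y z₂) :
    S.Collinear (S.third (S.third x z₁) (S.third y z₂)) (S.third x z₂) := by
  have hC := hGQ.collinear_third_third hxy hz hx₁ hx₂ hy₁ hy₂
  have hxm := hGQ.opposite_third_of_collinear_left hC (collinear_third_left hx₁)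
    (hGQ.opposite_third_of_collinear_right hy₂ hx₂ hxy)
  have hz₂m := hGQ.opposite_third_of_collinear_right hC (collinear_third_right hy₂)
    (hGQ.opposite_third_of_collinear_left hx₁ hx₂.symm hz.symm)
  exact hGQ.collinear_third_of_opposite hx₂ hxm.symm hz₂m.symm

/-- The points `x, y, z₁, z₂` span a `3 × 3` grid, whose ninth point is reached in two ways. -/
theorem third_third_eq_third_third (hGQ : S.IsGQ t) (hxy : S.Opposite x y)
    (hz : S.Opposite z₁ z₂) (hx₁ : S.Collinear x z₁) (hx₂ : S.Collinear x z₂)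
    (hy₁ : S.Collinear y z₁) (hy₂ : S.Collinear y z₂) :
    S.third (S.third x z₁) (S.third y z₂) = S.third (S.third x z₂) (S.third y z₁) := by
  have h₂ := hGQ.collinear_third_third_third hxy.symm hz.symm hy₂ hy₁ hx₂ hx₁
  rw [third_comm (hGQ.collinear_third_third hxy hz hx₁ hx₂ hy₁ hy₂)] at h₂
  exact hGQ.eq_third_of_collinear (hGQ.collinear_third_third hxy hz.symm hx₂ hx₁ hy₂ hy₁)
    (hGQ.collinear_third_third_third hxy hz hx₁ hx₂ hy₁ hy₂) h₂

theorem card_le_of_collinear (hGQ : S.IsGQ t) (hQ : S.IsSubspace Q) {f : P} (hf : f ∉ Q)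
    {ι : Type*} {p : ι → P} (hp : Function.Injective p) (hpQ : ∀ i, p i ∈ Q)
    (hcol : ∀ i, S.Collinear f (p i)) : Nat.card ι ≤ t + 1 := by
  have hfin : {l | l ∈ S.lines ∧ f ∈ l}.Finite :=
    Set.finite_of_ncard_pos (by rw [hGQ.2.2.1 f]; omega)
  have := hfin.to_subtype
  rw [← hGQ.2.2.1 f, ← Nat.card_coe_set_eq]
  refine Nat.card_le_card_of_injective
    (fun i => ⟨S.lineOf f (p i), lineOf_mem_lines (hcol i), left_mem_lineOf (hcol i)⟩)
    fun i j hij => by_contra fun hne => hf ?_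
  have hl : S.lineOf f (p i) = S.lineOf f (p j) := congrArg Subtype.val hij
  exact hQ _ (lineOf_mem_lines (hcol i)) _ (right_mem_lineOf (hcol i)) _
    (hl ▸ right_mem_lineOf (hcol j)) (hp.ne hne) (hpQ i) (hpQ j) (left_mem_lineOf (hcol i))

/-- The witness is `z 2 * m`, where `m = (x * z 0) * (y * z 1)` is the ninth point of the grid
spanned by `x, y, z 0, z 1`. -/
theorem exists_third_common_neighbour (hGQ : S.IsGQ t) (hxy : S.Opposite x y) {z : Fin 3 → P}
    (hxz : ∀ i, S.Collinear x (z i)) (hyz : ∀ i, S.Collinear y (z i))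
    (hz : ∀ i j, i ≠ j → S.Opposite (z i) (z j)) :
    ∃ s, (∀ i, S.Collinear (z i) s) ∧ S.Opposite x s ∧ S.Opposite y s ∧
      ∀ X : Set P, S.IsSubspace X → x ∈ X → y ∈ X → (∀ i, z i ∈ X) → s ∈ X := by
  have hC := hGQ.collinear_third_third hxy (hz 0 1 (by decide)) (hxz 0) (hxz 1) (hyz 0) (hyz 1)
  have hz₀m := hGQ.opposite_third_of_collinear_left hC (collinear_third_right (hxz 0))
    (hGQ.opposite_third_of_collinear_left (hyz 1) (hyz 0).symm (hz 0 1 (by decide)))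
  have hz₁m := hGQ.opposite_third_of_collinear_right hC (collinear_third_right (hyz 1))
    (hGQ.opposite_third_of_collinear_left (hxz 0) (hxz 1).symm (hz 1 0 (by decide)))
  have hz₂m := hGQ.collinear_third_of_opposite hC
    (hGQ.opposite_third_of_collinear_left (hxz 0) (hxz 2).symm (hz 2 0 (by decide)))
    (hGQ.opposite_third_of_collinear_left (hyz 1) (hyz 2).symm (hz 2 1 (by decide)))
  refine ⟨_, fun i => ?_, hGQ.opposite_third_of_collinear_left hz₂m (hxz 2)
      (hGQ.opposite_third_of_collinear_left hC (collinear_third_left (hxz 0))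
        (hGQ.opposite_third_of_collinear_right (hyz 1) (hxz 1) hxy)),
    hGQ.opposite_third_of_collinear_left hz₂m (hyz 2)
      (hGQ.opposite_third_of_collinear_right hC (collinear_third_left (hyz 1))
        (hGQ.opposite_third_of_collinear_right (hxz 0) (hyz 0) hxy.symm)),
    fun X hX hxX hyX hzX => hX.third_mem hz₂m (hzX 2) (hX.third_mem hC
      (hX.third_mem (hxz 0) hxX (hzX 0)) (hX.third_mem (hyz 1) hyX (hzX 1)))⟩
  fin_cases i
  · exact hGQ.collinear_third_of_opposite hz₂m (hz 0 2 (by decide)) hz₀m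
  · exact hGQ.collinear_third_of_opposite hz₂m (hz 1 2 (by decide)) hz₁m
  · exact collinear_third_left hz₂m

end IsGQ

namespace Rep

variable {R : Type*} [Group R] (ρ : S.Rep R)

theorem mul_self (p : P) : ρ.r p * ρ.r p = 1 := by
  rw [← pow_two, ← ρ.order_two p, pow_orderOf_eq_one]

theorem inv_eq (p : P) : (ρ.r p)⁻¹ = ρ.r p :=
  inv_eq_of_mul_eq_one_right (ρ.mul_self p)

theorem ne_one (p : P) : ρ.r p ≠ 1 := fun h => by
  simpa [h] using ρ.order_two p

theorem mul_eq_third (h : S.Collinear x y) : ρ.r x * ρ.r y = ρ.r (S.third x y) :=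
  ρ.line_rel _ (lineOf_mem_lines h) x (left_mem_lineOf h) y (right_mem_lineOf h) _
    (third_mem_lineOf h) h.ne (third_ne_left h).symm (third_ne_right h).symm

theorem commute_of_collinear (h : S.Collinear x y) : Commute (ρ.r x) (ρ.r y) := by
  rw [Commute, SemiconjBy, ρ.mul_eq_third h, ρ.mul_eq_third h.symm, third_comm h]

theorem mul_third_mul_third (hxz : S.Collinear x z) (hyz : S.Collinear y z) :
    ρ.r (S.third x z) * ρ.r (S.third y z) = ρ.r x * ρ.r y := by
  rw [← ρ.mul_eq_third hxz, ← ρ.mul_eq_third hyz, (ρ.commute_of_collinear hyz).eq, mul_assoc,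
    ← mul_assoc (ρ.r z), ρ.mul_self, one_mul]

/-- `r x r z₁ · r y r z₂` and `r x r z₂ · r y r z₁` both equal `r` of the ninth point of the grid
spanned by `x, y, z₁, z₂`. -/
theorem commute_of_opposite (hGQ : S.IsGQ t) (hxy : S.Opposite x y) (hz : S.Opposite z₁ z₂)
    (hx₁ : S.Collinear x z₁) (hx₂ : S.Collinear x z₂) (hy₁ : S.Collinear y z₁)
    (hy₂ : S.Collinear y z₂) : Commute (ρ.r z₁) (ρ.r z₂) := by
  have key : ρ.r x * ρ.r z₁ * (ρ.r y * ρ.r z₂) = ρ.r x * ρ.r z₂ * (ρ.r y * ρ.r z₁) := by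
    rw [ρ.mul_eq_third hx₁, ρ.mul_eq_third hy₂,
      ρ.mul_eq_third (hGQ.collinear_third_third hxy hz hx₁ hx₂ hy₁ hy₂), ρ.mul_eq_third hx₂,
      ρ.mul_eq_third hy₁, ρ.mul_eq_third (hGQ.collinear_third_third hxy hz.symm hx₂ hx₁ hy₂ hy₁),
      hGQ.third_third_eq_third_third hxy hz hx₁ hx₂ hy₁ hy₂]
  rw [mul_assoc, mul_assoc, mul_right_inj, (ρ.commute_of_collinear hy₂).eq,
    (ρ.commute_of_collinear hy₁).eq, ← mul_assoc, ← mul_assoc] at key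
  exact mul_right_cancel key

theorem commute (hGQ : S.IsGQ t) (ht : 1 ≤ t) (u w : P) : Commute (ρ.r u) (ρ.r w) := by
  by_cases huw : u = w
  · exact huw ▸ Commute.refl _
  by_cases hc : S.Collinear u w
  · exact ρ.commute_of_collinear hc
  obtain ⟨l₁, hl₁, l₂, hl₂, hne, hu₁, hu₂⟩ := hGQ.exists_two_lines ht u
  obtain ⟨x, hx, hux, hwx⟩ := hGQ.exists_collinear_mem_of_opposite ⟨huw, hc⟩ hl₁ hu₁
  obtain ⟨y, hy, huy, hwy⟩ := hGQ.exists_collinear_mem_of_opposite ⟨huw, hc⟩ hl₂ hu₂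
  exact ρ.commute_of_opposite hGQ
    (hGQ.opposite_of_mem_of_mem hl₁ hl₂ hne hu₁ hu₂ hx hy hux.ne.symm huy.ne.symm) ⟨huw, hc⟩
    hux.symm hwx.symm huy.symm hwy.symm

theorem mul_comm (ρ : S.Rep R) (hGQ : S.IsGQ t) (ht : 1 ≤ t) (g h : R) : g * h = h * g := by
  have hcomm := Set.centralizer_centralizer_comm_of_comm (S := Set.range ρ.r)
    (by rintro _ ⟨u, rfl⟩ _ ⟨w, rfl⟩; exact ρ.commute hGQ ht u w)
  have hmem : ∀ g : R, g ∈ (Set.range ρ.r).centralizer.centralizer := fun g =>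
    Subgroup.closure_le_centralizer_centralizer _ (ρ.gen ▸ Subgroup.mem_top g)
  exact hcomm g (hmem g) h (hmem h)

theorem mul_ne_one (hf : Function.Injective ρ.r) (h : p ≠ q) : ρ.r p * ρ.r q ≠ 1 := fun h' =>
  h (hf (by rw [← ρ.inv_eq q]; exact eq_inv_of_mul_eq_one_left h'))

theorem opposite_left_of_mul_eq (hf : Function.Injective ρ.r) (hpq : S.Opposite p q)
    (h : ρ.r p * ρ.r q = ρ.r w) : S.Opposite w p := by
  have hq : ρ.r q = ρ.r p * ρ.r w := by rw [← h, ← mul_assoc, ρ.mul_self, one_mul]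
  refine ⟨?_, fun hwp => hpq.2 ?_⟩
  · rintro rfl
    exact ρ.ne_one q (mul_eq_left.mp h)
  · rw [hf (hq.trans (ρ.mul_eq_third hwp.symm))]
    exact collinear_third_left hwp.symm

theorem opposite_right_of_mul_eq (hf : Function.Injective ρ.r) (hpq : S.Opposite p q)
    (h : ρ.r p * ρ.r q = ρ.r w) : S.Opposite w q := by
  have hp : ρ.r p = ρ.r w * ρ.r q := by rw [← h, mul_assoc, ρ.mul_self, mul_one]
  refine ⟨?_, fun hwq => hpq.2 ?_⟩
  · rintro rfl
    exact ρ.ne_one p (mul_eq_right.mp h)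
  · rw [hf (hp.trans (ρ.mul_eq_third hwq))]
    exact (collinear_third_right hwq).symm

theorem isSubspace_preimage (K : Subgroup R) : S.IsSubspace {w | ρ.r w ∈ K} := by
  intro l hl p hp q hq hpq hpK hqK w hw
  have hcol := collinear_of_mem hl hp hq hpq
  rw [eq_lineOf_of_mem hcol hl hp hq, Finset.mem_coe, mem_lineOf_iff hcol] at hw
  rcases hw with rfl | rfl | rfl
  · exact hpK
  · exact hqK
  · show ρ.r _ ∈ K
    rw [← ρ.mul_eq_third hcol]
    exact K.mul_mem hpK hqK

end Rep

namespace IsSubGQ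

theorem isSubspace {s : ℕ} (hQ : S.IsSubGQ Q s) : S.IsSubspace Q := hQ.2.2.1

theorem exists_line_not_subset {s : ℕ} (hQ : S.IsSubGQ Q s) (hGQ : S.IsGQ t) (hst : s < t)
    (hx : x ∈ Q) : ∃ l ∈ S.lines, x ∈ l ∧ ¬ (l : Set P) ⊆ Q := by
  by_contra! h
  have hlines : {l | l ∈ S.lines ∧ x ∈ l} = {l | l ∈ S.lines ∧ x ∈ l ∧ (l : Set P) ⊆ Q} :=
    Set.ext fun l => ⟨fun hl => ⟨hl.1, hl.2, h l hl.1 hl.2⟩, fun hl => ⟨hl.1, hl.2.1⟩⟩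
  have := hGQ.2.2.1 x
  rw [hlines, hQ.2.2.2.2.2.1 x hx] at this
  omega

/-- The three lines of `Q` through `p` are those through `p` and three pairwise opposite points. -/
theorem mem_of_collinear {X : Set P} (hQ : S.IsSubGQ Q 2) (hX : S.IsSubspace X) {q₁ q₂ q₃ : P}
    (hp : p ∈ Q) (hq₁ : q₁ ∈ Q) (hq₂ : q₂ ∈ Q) (hq₃ : q₃ ∈ Q) (hpX : p ∈ X) (hq₁X : q₁ ∈ X)
    (hq₂X : q₂ ∈ X) (hq₃X : q₃ ∈ X) (h₁ : S.Collinear p q₁) (h₂ : S.Collinear p q₂)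
    (h₃ : S.Collinear p q₃) (h₁₂ : S.Opposite q₁ q₂) (h₁₃ : S.Opposite q₁ q₃)
    (h₂₃ : S.Opposite q₂ q₃) (hw : w ∈ Q) (hpw : S.Collinear p w) : w ∈ X := by
  have hmem : ∀ {q}, q ∈ Q → S.Collinear p q →
      S.lineOf p q ∈ {l | l ∈ S.lines ∧ p ∈ l ∧ (l : Set P) ⊆ Q} := fun hq h =>
    ⟨lineOf_mem_lines h, left_mem_lineOf h, hQ.isSubspace.lineOf_subset h hp hq⟩
  have hlines : ({S.lineOf p q₁, S.lineOf p q₂, S.lineOf p q₃} : Set (Finset P)) =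
      {l | l ∈ S.lines ∧ p ∈ l ∧ (l : Set P) ⊆ Q} := by
    refine Set.eq_of_subset_of_ncard_le ?_ ?_ (Set.finite_of_ncard_pos ?_)
    · rintro l (rfl | rfl | rfl)
      exacts [hmem hq₁ h₁, hmem hq₂ h₂, hmem hq₃ h₃]
    all_goals rw [hQ.2.2.2.2.2.1 p hp]
    · exact (Set.ncard_eq_three.mpr ⟨_, _, _, lineOf_ne_lineOf h₁ h₂ h₁₂,
        lineOf_ne_lineOf h₁ h₃ h₁₃, lineOf_ne_lineOf h₂ h₃ h₂₃, rfl⟩).ge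
    · norm_num
  have hwp := right_mem_lineOf hpw
  rcases hlines ▸ hmem hw hpw with h | h | h <;> rw [h] at hwp
  exacts [hX.lineOf_subset h₁ hpX hq₁X hwp, hX.lineOf_subset h₂ hpX hq₂X hwp,
    hX.lineOf_subset h₃ hpX hq₃X hwp]

end IsSubGQ

end

variable {u v x y : P} {z : Fin 3 → P}

/-- A frame of a `(2,2)`-subGQ `Q`: it generates `Q` as a subspace, and in a faithful
representation its five points are independent. -/
structure IsFrame (S : SlimPLS P) (Q : Set P) (x y : P) (z : Fin 3 → P) : Prop where
  left_mem : x ∈ Q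
  right_mem : y ∈ Q
  mem : ∀ i, z i ∈ Q
  opposite : S.Opposite x y
  collinear_left : ∀ i, S.Collinear x (z i)
  collinear_right : ∀ i, S.Collinear y (z i)
  pairwise_opposite : ∀ i j, i ≠ j → S.Opposite (z i) (z j)

theorem IsSubGQ.exists_isFrame (hQ : S.IsSubGQ Q 2) (hGQ : S.IsGQ t) (hx : x ∈ Q) (hy : y ∈ Q)
    (hxy : S.Opposite x y) : ∃ z, S.IsFrame Q x y z := by
  have hT : Nat.card {l | l ∈ S.lines ∧ x ∈ l ∧ (l : Set P) ⊆ Q} = 3 := hQ.2.2.2.2.2.1 x hx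
  have := Nat.finite_of_card_ne_zero (hT.trans_ne (by norm_num))
  let e := (Finite.equivFinOfCardEq hT).symm
  choose z hzl hxz hyz using fun i =>
    hGQ.exists_collinear_mem_of_opposite hxy (e i).2.1 (e i).2.2.1
  exact ⟨z, hx, hy, fun i => (e i).2.2.2 (hzl i), hxy, hxz, hyz, fun i j hij =>
    hGQ.opposite_of_mem_of_mem (e i).2.1 (e j).2.1 (fun h => hij (e.injective (Subtype.ext h)))
      (e i).2.2.1 (e j).2.2.1 (hzl i) (hzl j) (hxz i).ne.symm (hxz j).ne.symm⟩

namespace IsFrame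

theorem subset_of_isSubspace (hF : S.IsFrame Q x y z) (hQ : S.IsSubGQ Q 2) (hGQ : S.IsGQ t)
    {X : Set P} (hX : S.IsSubspace X) (hxX : x ∈ X) (hyX : y ∈ X) (hzX : ∀ i, z i ∈ X) :
    Q ⊆ X := by
  obtain ⟨hx, hy, hzQ, hxy, hxz, hyz, hz⟩ := hF
  obtain ⟨s, hzs, hxs, hys, hsX⟩ := hGQ.exists_third_common_neighbour hxy hxz hyz hz
  have hQ' := hQ.isSubspace
  have hsQ := hsX Q hQ' hx hy hzQ
  intro w hw
  by_cases hxw : x = w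
  · exact hxw ▸ hxX
  by_cases hcxw : S.Collinear x w
  · exact hQ.mem_of_collinear hX hx (hzQ 0) (hzQ 1) (hzQ 2) hxX (hzX 0) (hzX 1) (hzX 2) (hxz 0)
      (hxz 1) (hxz 2) (hz 0 1 (by decide)) (hz 0 2 (by decide)) (hz 1 2 (by decide)) hw hcxw
  by_cases hzw : ∃ i, S.Collinear (z i) w
  · obtain ⟨i, hi⟩ := hzw
    exact hQ.mem_of_collinear hX (hzQ i) hx hy hsQ (hzX i) hxX hyX (hsX X hX hxX hyX hzX)
      (hxz i).symm (hyz i).symm (hzs i) hxy hxs hys hw hi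
  simp only [not_exists] at hzw
  have hwa := hGQ.collinear_third_of_opposite (hxz 0) ⟨Ne.symm hxw, fun h => hcxw h.symm⟩
    ⟨fun h => hcxw (h ▸ hxz 0), fun h => hzw 0 h.symm⟩
  exact hQ.mem_of_collinear hX (hQ'.third_mem (hxz 0) hx (hzQ 0))
    hx (hQ'.third_mem (hyz 1) hy (hzQ 1)) (hQ'.third_mem (hyz 2) hy (hzQ 2))
    (hX.third_mem (hxz 0) hxX (hzX 0)) hxX (hX.third_mem (hyz 1) hyX (hzX 1))
    (hX.third_mem (hyz 2) hyX (hzX 2)) (collinear_third_left (hxz 0)).symm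
    (hGQ.collinear_third_third hxy (hz 0 1 (by decide)) (hxz 0) (hxz 1) (hyz 0) (hyz 1))
    (hGQ.collinear_third_third hxy (hz 0 2 (by decide)) (hxz 0) (hxz 2) (hyz 0) (hyz 2))
    (hGQ.opposite_third_of_collinear_right (hyz 1) (hxz 1) hxy)
    (hGQ.opposite_third_of_collinear_right (hyz 2) (hxz 2) hxy)
    (hGQ.opposite_third_third (hyz 1) (hyz 2) (hz 1 2 (by decide))) hw hwa.symm

/-- The six points `x * z i` and `y * z i` of `Q` lie on six different lines through `f`, which
has only five. -/
theorem not_forall_collinear_thirds (hF : S.IsFrame Q x y z) (hGQ : S.IsGQ 4)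
    (hQ : S.IsSubspace Q) {f : P} (hf : f ∉ Q) :
    ¬ ∀ i, S.Collinear f (S.third x (z i)) ∧ S.Collinear f (S.third y (z i)) := by
  intro hcol
  have hinj : ∀ {v}, (∀ i, S.Collinear v (z i)) → Function.Injective fun i => S.third v (z i) :=
    fun hv i j hij => by_contra fun hne =>
      (hGQ.opposite_third_third (hv i) (hv j) (hF.pairwise_opposite i j hne)).1 hij
  have hcard := hGQ.card_le_of_collinear hQ hf
    ((hinj hF.collinear_left).sumElim (hinj hF.collinear_right) fun i j h =>
      (hGQ.opposite_third_of_collinear_right (hF.collinear_right j) (hF.collinear_left j)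
        hF.opposite).2 (h ▸ collinear_third_left (hF.collinear_left i)))
    (Sum.forall.2 ⟨fun i => hQ.third_mem (hF.collinear_left i) hF.left_mem (hF.mem i),
      fun i => hQ.third_mem (hF.collinear_right i) hF.right_mem (hF.mem i)⟩)
    (Sum.forall.2 ⟨fun i => (hcol i).1, fun i => (hcol i).2⟩)
  simp at hcard

end IsFrame

namespace Rep

section

variable {R : Type*} [Group R] (ρ : S.Rep R)

/-- Shifting the relation along the point `w ∼ y` of a line through `x` not in `Q` shows `u ∼ w`,
and then `u * w ∉ Q` is collinear with six points of `Q`. -/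
theorem mul_ne_of_opposite (hGQ : S.IsGQ 4) (hQ : S.IsSubGQ Q 2) (hf : Function.Injective ρ.r)
    (hx : x ∈ Q) (hy : y ∈ Q) (hu : u ∈ Q) (hxy : S.Opposite x y) : ρ.r x * ρ.r y ≠ ρ.r u := by
  intro h
  obtain ⟨z, hF⟩ := hQ.exists_isFrame hGQ hx hy hxy
  obtain ⟨l, hl, hxl, hlQ⟩ := hQ.exists_line_not_subset hGQ (by norm_num) hx
  obtain ⟨w, hwl, hxw, hyw⟩ := hGQ.exists_collinear_mem_of_opposite hxy hl hxl
  have hwQ : w ∉ Q := fun hw =>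
    hlQ (eq_lineOf_of_mem hxw hl hxl hwl ▸ hQ.isSubspace.lineOf_subset hxw hx hw)
  have huw : S.Collinear u w := by
    have hux' := ρ.opposite_left_of_mul_eq hf
      (hGQ.opposite_third_of_collinear_of_collinear hxy hxw hyw)
      ((ρ.mul_third_mul_third hxw hyw).trans h)
    by_contra huw
    exact hux'.2 (hGQ.collinear_third_of_opposite hxw (ρ.opposite_left_of_mul_eq hf hxy h)
      ⟨fun e => hwQ (e ▸ hu), huw⟩)
  have hfQ : S.third u w ∉ Q := fun hf' =>
    hwQ (third_third huw ▸ hQ.isSubspace.third_mem (collinear_third_left huw) hu hf')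
  have hw : ∀ {v}, v ∈ Q → S.Collinear v w → ∀ i, S.Collinear v (z i) →
      S.Opposite (S.third v (z i)) w := fun hv hvw i hvz =>
    (hGQ.opposite_of_collinear (collinear_third_left hvz) hvw.symm
      (fun e => hwQ (e ▸ hQ.isSubspace.third_mem hvz hv (hF.mem i)))
      (by rw [third_third hvz]; exact fun e => hwQ (e ▸ hF.mem i))).symm
  refine hF.not_forall_collinear_thirds hGQ hQ.isSubspace hfQ fun i => ?_
  have hrel := (ρ.mul_third_mul_third (hF.collinear_left i) (hF.collinear_right i)).trans h
  have hab := hGQ.opposite_third_of_collinear_of_collinear hxy (hF.collinear_left i)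
    (hF.collinear_right i)
  exact ⟨(hGQ.collinear_third_of_opposite huw (ρ.opposite_left_of_mul_eq hf hab hrel).symm
      (hw hx hxw i (hF.collinear_left i))).symm,
    (hGQ.collinear_third_of_opposite huw (ρ.opposite_right_of_mul_eq hf hab hrel).symm
      (hw hy hyw i (hF.collinear_right i))).symm⟩

theorem closure_image_eq (hQ : S.IsSubGQ Q 2) (hGQ : S.IsGQ t) (hF : S.IsFrame Q x y z) :
    Subgroup.closure (ρ.r '' Q) = Subgroup.closure (ρ.r '' Set.range (Sum.elim ![x, y] z)) := by
  refine le_antisymm ((Subgroup.closure_le _).mpr ?_) (Subgroup.closure_mono (Set.image_mono ?_))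
  · rintro _ ⟨w, hw, rfl⟩
    have hmem : ∀ i, Sum.elim ![x, y] z i ∈
        {w | ρ.r w ∈ Subgroup.closure (ρ.r '' Set.range (Sum.elim ![x, y] z))} := fun i =>
      Subgroup.subset_closure ⟨_, ⟨i, rfl⟩, rfl⟩
    exact hF.subset_of_isSubspace hQ hGQ (ρ.isSubspace_preimage _) (hmem (.inl 0))
      (hmem (.inl 1)) (fun i => hmem (.inr i)) hw
  · rintro _ ⟨i | i, rfl⟩
    · fin_cases i
      exacts [hF.left_mem, hF.right_mem]
    · exact hF.mem i

end

variable {R : Type*} [CommGroup R] (ρ : S.Rep R)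

theorem prod_ne_one_of_opposite (hGQ : S.IsGQ 4) (hQ : S.IsSubGQ Q 2)
    (hf : Function.Injective ρ.r) (hzQ : ∀ i, z i ∈ Q)
    (hz : ∀ i j, i ≠ j → S.Opposite (z i) (z j)) {B : Finset (Fin 3)} (hB : B.Nonempty) :
    ∏ i ∈ B, ρ.r (z i) ≠ 1 := by
  have hcard : B.card ≤ 3 := (Finset.card_le_univ B).trans_eq (Fintype.card_fin 3)
  rcases (by have := hB.card_pos; omega : B.card = 1 ∨ B.card = 2 ∨ B.card = 3) with h | h | h
  · obtain ⟨i, rfl⟩ := Finset.card_eq_one.mp h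
    simpa using ρ.ne_one (z i)
  · obtain ⟨i, j, hij, rfl⟩ := Finset.card_eq_two.mp h
    rw [Finset.prod_pair hij]
    exact ρ.mul_ne_one hf (hz i j hij).1
  · obtain ⟨i, j, k, hij, hik, hjk, rfl⟩ := Finset.card_eq_three.mp h
    rw [Finset.prod_insert (by simp [hij, hik]), Finset.prod_pair hjk, ← mul_assoc, Ne,
      mul_eq_one_iff_eq_inv, ρ.inv_eq]
    exact ρ.mul_ne_of_opposite hGQ hQ hf (hzQ i) (hzQ j) (hzQ k) (hz i j hij)

/-- Multiplying by `r v` replaces `z i` by `v * z i`, which keeps the `z j` pairwise opposite. -/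
theorem mul_prod_ne_one_of_collinear (hGQ : S.IsGQ 4) (hQ : S.IsSubGQ Q 2)
    (hf : Function.Injective ρ.r) (hzQ : ∀ i, z i ∈ Q)
    (hz : ∀ i j, i ≠ j → S.Opposite (z i) (z j)) (hv : v ∈ Q) (hvz : ∀ i, S.Collinear v (z i))
    (B : Finset (Fin 3)) : ρ.r v * ∏ i ∈ B, ρ.r (z i) ≠ 1 := by
  rcases B.eq_empty_or_nonempty with rfl | ⟨i, hi⟩
  · simpa using ρ.ne_one v
  set z' := Function.update z i (S.third v (z i))
  have hz'Q : ∀ j, z' j ∈ Q := fun j => by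
    rcases eq_or_ne j i with rfl | hj
    · simpa [z'] using hQ.isSubspace.third_mem (hvz j) hv (hzQ j)
    · simpa [z', hj] using hzQ j
  have hz' : ∀ j k, j ≠ k → S.Opposite (z' j) (z' k) := fun j k hjk => by
    have hopp : ∀ {j}, j ≠ i → S.Opposite (S.third v (z i)) (z j) := fun hj =>
      (hGQ.opposite_third_of_collinear_left (hvz i) (hvz _).symm (hz _ i hj)).symm
    rcases eq_or_ne j i with rfl | hj <;> rcases eq_or_ne k j with rfl | hk
    · exact absurd rfl hjk
    · simpa [z', hk] using hopp hk
    · exact absurd rfl hjk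
    · rcases eq_or_ne k i with rfl | hki
      · simpa [z', hj] using (hopp hj).symm
      · simpa [z', hj, hki] using hz j k hjk
  have hprod : ρ.r v * ∏ j ∈ B, ρ.r (z j) = ∏ j ∈ B, ρ.r (z' j) := by
    rw [← Finset.mul_prod_erase B _ hi, ← Finset.mul_prod_erase B _ hi, ← mul_assoc,
      ρ.mul_eq_third (hvz i)]
    congr 1
    · simp [z']
    · exact Finset.prod_congr rfl fun j hj => by simp [z', Finset.ne_of_mem_erase hj]
  rw [hprod]
  exact ρ.prod_ne_one_of_opposite hGQ hQ hf hz'Q hz' ⟨i, hi⟩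

theorem mul_mul_prod_ne_one (hGQ : S.IsGQ 4) (hf : Function.Injective ρ.r)
    (hxy : S.Opposite x y) (hxz : ∀ i, S.Collinear x (z i)) (hyz : ∀ i, S.Collinear y (z i))
    (hz : ∀ i j, i ≠ j → S.Opposite (z i) (z j)) (B : Finset (Fin 3)) :
    ρ.r x * ρ.r y * ∏ i ∈ B, ρ.r (z i) ≠ 1 := by
  have hcard : B.card ≤ 3 := (Finset.card_le_univ B).trans_eq (Fintype.card_fin 3)
  have hxb : ∀ i, S.Opposite x (S.third y (z i)) := fun i =>
    hGQ.opposite_third_of_collinear_right (hyz i) (hxz i) hxy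
  have hab : ∀ i j, S.third x (z i) ≠ S.third y (z j) := fun i j h =>
    (hxb j).2 (h ▸ collinear_third_left (hxz i))
  rcases (by omega : B.card = 0 ∨ B.card = 1 ∨ B.card = 2 ∨ B.card = 3) with h | h | h | h
  · rw [Finset.card_eq_zero.mp h, Finset.prod_empty, mul_one]
    exact ρ.mul_ne_one hf hxy.1
  · obtain ⟨i, rfl⟩ := Finset.card_eq_one.mp h
    rw [Finset.prod_singleton, mul_assoc, ρ.mul_eq_third (hyz i)]
    exact ρ.mul_ne_one hf (hxb i).1
  · obtain ⟨i, j, hij, rfl⟩ := Finset.card_eq_two.mp h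
    rw [Finset.prod_pair hij, show ρ.r x * ρ.r y * (ρ.r (z i) * ρ.r (z j)) =
      ρ.r x * ρ.r (z j) * (ρ.r y * ρ.r (z i)) by ac_rfl, ρ.mul_eq_third (hxz j),
      ρ.mul_eq_third (hyz i)]
    exact ρ.mul_ne_one hf (hab j i)
  · obtain ⟨i, j, k, hij, hik, hjk, rfl⟩ := Finset.card_eq_three.mp h
    have hC := hGQ.collinear_third_third hxy (hz i j hij) (hxz i) (hxz j) (hyz i) (hyz j)
    have hzm := hGQ.collinear_third_of_opposite hC
      (hGQ.opposite_third_of_collinear_left (hxz i) (hxz k).symm (hz k i hik.symm))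
      (hGQ.opposite_third_of_collinear_left (hyz j) (hyz k).symm (hz k j hjk.symm))
    rw [Finset.prod_insert (by simp [hij, hik]), Finset.prod_pair hjk,
      show ρ.r x * ρ.r y * (ρ.r (z i) * (ρ.r (z j) * ρ.r (z k))) =
        ρ.r x * ρ.r (z i) * (ρ.r y * ρ.r (z j)) * ρ.r (z k) by ac_rfl,
      ρ.mul_eq_third (hxz i), ρ.mul_eq_third (hyz j), ρ.mul_eq_third hC]
    exact ρ.mul_ne_one hf hzm.ne.symm

theorem eq_empty_of_prod_eq_one (hGQ : S.IsGQ 4) (hQ : S.IsSubGQ Q 2)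
    (hf : Function.Injective ρ.r) (hF : S.IsFrame Q x y z) (s : Finset (Fin 2 ⊕ Fin 3))
    (hs : ∏ i ∈ s, ρ.r (Sum.elim ![x, y] z i) = 1) : s = ∅ := by
  rw [Finset.prod_sum_eq_prod_toLeft_mul_prod_toRight] at hs
  rw [← Finset.toLeft_disjSum_toRight (u := s), Finset.disjSum_eq_empty]
  generalize s.toLeft = A at hs ⊢
  generalize s.toRight = B at hs ⊢
  obtain rfl | rfl | rfl | rfl :=
    (by decide : ∀ A : Finset (Fin 2), A = ∅ ∨ A = {0} ∨ A = {1} ∨ A = {0, 1}) A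
  · rw [Finset.prod_empty, one_mul] at hs
    exact ⟨rfl, Finset.not_nonempty_iff_eq_empty.mp fun hB =>
      ρ.prod_ne_one_of_opposite hGQ hQ hf hF.mem hF.pairwise_opposite hB hs⟩
  · rw [Finset.prod_singleton] at hs
    exact absurd hs (ρ.mul_prod_ne_one_of_collinear hGQ hQ hf hF.mem hF.pairwise_opposite
      hF.left_mem hF.collinear_left B)
  · rw [Finset.prod_singleton] at hs
    exact absurd hs (ρ.mul_prod_ne_one_of_collinear hGQ hQ hf hF.mem hF.pairwise_opposite
      hF.right_mem hF.collinear_right B)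
  · rw [Finset.prod_pair (by decide)] at hs
    exact absurd hs (ρ.mul_mul_prod_ne_one hGQ hf hF.opposite hF.collinear_left
      hF.collinear_right hF.pairwise_opposite B)

end Rep

end SlimPLS

/-- For a faithful representation of the `(2,4)`-GQ and a
`(2,2)`-subGQ `Q`, the subgroup generated by `{r_x : x ∈ Q}` has order `2^5`. -/
theorem gq24_subGQ22_closure_card {P : Type*} (S : SlimPLS P)
    (hGQ : S.IsGQ 4) {R : Type*} [Group R] (ρ : S.Rep R)
    (hf : Function.Injective ρ.r)
    (Q : Set P) (hQ : S.IsSubGQ Q 2) :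
    Nat.card (Subgroup.closure (ρ.r '' Q)) = 2 ^ 5 := by
  let : CommGroup R := { ‹Group R› with mul_comm := ρ.mul_comm hGQ (by norm_num) }
  obtain ⟨x, hx⟩ := hQ.1
  obtain ⟨y, hy, hyx, hxy⟩ := hQ.2.2.2.2.1 x hx
  obtain ⟨z, hF⟩ := hQ.exists_isFrame hGQ hx hy ⟨hyx.symm, hxy⟩
  rw [ρ.closure_image_eq hQ hGQ hF, ← Set.range_comp,
    Subgroup.card_closure_range_eq_two_pow (ρ.r ∘ Sum.elim ![x, y] z) (fun _ => ρ.mul_self _)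
      (ρ.eq_empty_of_prod_eq_one hGQ hQ hf hF)]
  rfl
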